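/- Let S ⊆ F_2^{2n} × F_2^{2m} be an isotropic subspace (a bipartite stabilizer group in symplectic representation over two parts L and R), with restriction maps π_L and π_R to the two factors. Let Z_L = {s ∈ π_L(S) : ω_L(s, t) = 0 for all t ∈ π_L(S)} be the center of S_L = π_L(S). If S is maximal isotropic (dim S = n + m), then dim(S_L) + dim(Z_L) = 2n, and hence the number of anticommuting pairs p = dim(S_L) − n satisfies dim(Z_L) = n − p. -/

import Mathlib

open Module

def sform (k : ℕ) : LinearMap.BilinForm (ZMod 2) ((Fin k → ZMod 2) × (Fin k → ZMod 2)) :=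
  LinearMap.mk₂ (ZMod 2)
    (fun u v => ∑ i, (u.1 i * v.2 i + u.2 i * v.1 i))
    (by intro u u' v
        simp only [Prod.fst_add, Prod.snd_add, Pi.add_apply, ← Finset.sum_add_distrib]
        apply Finset.sum_congr rfl; intros; ring)
    (by intro c u v
        simp only [Prod.smul_fst, Prod.smul_snd, Pi.smul_apply, smul_eq_mul, Finset.mul_sum]
        apply Finset.sum_congr rfl; intros; ring)
    (by intro u v v'
        simp only [Prod.fst_add, Prod.snd_add, Pi.add_apply, ← Finset.sum_add_distrib]
        apply Finset.sum_congr rfl; intros; ring)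
    (by intro c u v
        simp only [Prod.smul_fst, Prod.smul_snd, Pi.smul_apply, smul_eq_mul, Finset.mul_sum]
        apply Finset.sum_congr rfl; intros; ring)

lemma sform_apply (k : ℕ) (u v) : sform k u v = ∑ i, (u.1 i * v.2 i + u.2 i * v.1 i) := rfl

lemma sform_symm (k : ℕ) (u v) : sform k u v = sform k v u := by
  simp only [sform_apply]; apply Finset.sum_congr rfl; intros; ring

lemma sform_isRefl (k : ℕ) : (sform k).IsRefl := fun u v h => by rw [← sform_symm]; exact h

lemma sform_nondeg (k : ℕ) : (sform k).Nondegenerate := by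
  refine LinearMap.BilinForm.Nondegenerate.ofSeparatingLeft ?_
  intro u h
  have h1 : ∀ i, u.1 i = 0 := by
    intro i
    have := h (0, Pi.single i 1)
    simpa [sform_apply, Pi.single_apply, mul_ite, Finset.sum_ite_eq'] using this
  have h2 : ∀ i, u.2 i = 0 := by
    intro i
    have := h (Pi.single i 1, 0)
    simpa [sform_apply, Pi.single_apply, mul_ite, Finset.sum_ite_eq'] using this
  ext i
  · exact h1 i
  · exact h2 i

def pform (n m : ℕ) : LinearMap.BilinForm (ZMod 2)
    (((Fin n → ZMod 2) × (Fin n → ZMod 2)) × ((Fin m → ZMod 2) × (Fin m → ZMod 2))) :=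
  LinearMap.mk₂ (ZMod 2)
    (fun u v => sform n u.1 v.1 + sform m u.2 v.2)
    (by intro u u' v; simp only [Prod.fst_add, Prod.snd_add, map_add, LinearMap.add_apply]; ring)
    (by intro c u v; simp only [Prod.smul_fst, Prod.smul_snd, map_smul, LinearMap.smul_apply,
          smul_eq_mul]; ring)
    (by intro u v v'; simp only [Prod.fst_add, Prod.snd_add, map_add]; ring)
    (by intro c u v; simp only [Prod.smul_fst, Prod.smul_snd, map_smul, smul_eq_mul]; ring)

lemma pform_apply (n m : ℕ) (u v) : pform n m u v = sform n u.1 v.1 + sform m u.2 v.2 := rfl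

lemma pform_symm (n m : ℕ) (u v) : pform n m u v = pform n m v u := by
  simp only [pform_apply, sform_symm]

lemma pform_isRefl (n m : ℕ) : (pform n m).IsRefl := fun u v h => by rw [pform_symm]; exact h

lemma pform_nondeg (n m : ℕ) : (pform n m).Nondegenerate := by
  refine LinearMap.BilinForm.Nondegenerate.ofSeparatingLeft ?_
  intro u h
  have h1 : u.1 = 0 := (sform_nondeg n).1 u.1 (fun v => by
    have := h (v, 0)
    simpa [pform_apply] using this)
  have h2 : u.2 = 0 := (sform_nondeg m).1 u.2 (fun v => by
    have := h (0, v)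
    simpa [pform_apply] using this)
  exact Prod.ext h1 h2

/-- Dimension count for the canonical bipartite form of a stabilizer state: if
`S ⊆ F_2^{2n} × F_2^{2m}` is maximal isotropic for `ω_L ⊕ ω_R`, `S_L` is its projection
to the left factor and `Z_L` the radical of `ω_L` restricted to `S_L`, then
`dim S_L + dim Z_L = 2n`; hence if `dim S_L = n + p` then `dim Z_L = n - p`. -/
theorem stmt_11 (n m : ℕ)
    (ωL : ((Fin n → ZMod 2) × (Fin n → ZMod 2)) →
      ((Fin n → ZMod 2) × (Fin n → ZMod 2)) → ZMod 2)
    (hωL : ∀ u v, ωL u v = ∑ i, (u.1 i * v.2 i + u.2 i * v.1 i))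
    (ωR : ((Fin m → ZMod 2) × (Fin m → ZMod 2)) →
      ((Fin m → ZMod 2) × (Fin m → ZMod 2)) → ZMod 2)
    (hωR : ∀ u v, ωR u v = ∑ i, (u.1 i * v.2 i + u.2 i * v.1 i))
    (S : Submodule (ZMod 2)
      (((Fin n → ZMod 2) × (Fin n → ZMod 2)) × ((Fin m → ZMod 2) × (Fin m → ZMod 2))))
    (hiso : ∀ u ∈ S, ∀ v ∈ S, ωL u.1 v.1 + ωR u.2 v.2 = 0)
    (hmax : finrank (ZMod 2) S = n + m)
    (SL : Submodule (ZMod 2) ((Fin n → ZMod 2) × (Fin n → ZMod 2)))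
    (hSL : SL = S.map (LinearMap.fst (ZMod 2) _ _))
    (ZL : Submodule (ZMod 2) ((Fin n → ZMod 2) × (Fin n → ZMod 2)))
    (hZL : ∀ x, x ∈ ZL ↔ x ∈ SL ∧ ∀ t ∈ SL, ωL x t = 0) :
    finrank (ZMod 2) SL + finrank (ZMod 2) ZL = 2 * n ∧
      ∀ p : ℕ, finrank (ZMod 2) SL = n + p → finrank (ZMod 2) ZL = n - p := by
  have hωL' : ∀ u v, ωL u v = sform n u v := fun u v => by rw [hωL, sform_apply]
  have hωR' : ∀ u v, ωR u v = sform m u v := fun u v => by rw [hωR, sform_apply]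
  -- total space dimensions
  have hVn : finrank (ZMod 2) ((Fin n → ZMod 2) × (Fin n → ZMod 2)) = 2 * n := by
    rw [Module.finrank_prod, Module.finrank_fin_fun]; ring
  have hVm : finrank (ZMod 2) ((Fin m → ZMod 2) × (Fin m → ZMod 2)) = 2 * m := by
    rw [Module.finrank_prod, Module.finrank_fin_fun]; ring
  have htot : finrank (ZMod 2)
      (((Fin n → ZMod 2) × (Fin n → ZMod 2)) × ((Fin m → ZMod 2) × (Fin m → ZMod 2)))
      = 2 * n + 2 * m := by
    rw [Module.finrank_prod, hVn, hVm]
  -- S is self-orthogonal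
  have hle : S ≤ (pform n m).orthogonal S := by
    intro u hu
    rw [LinearMap.BilinForm.mem_orthogonal_iff]
    intro v hv
    have := hiso v hv u hu
    rw [hωL', hωR'] at this
    exact this
  have horthS : finrank (ZMod 2) ((pform n m).orthogonal S) = n + m := by
    rw [LinearMap.BilinForm.finrank_orthogonal (pform_nondeg n m), htot, hmax]
    omega
  have hSorth : S = (pform n m).orthogonal S :=
    Submodule.eq_of_le_of_finrank_le hle (by rw [horthS, hmax])
  -- the left kernel A
  set A : Submodule (ZMod 2) ((Fin n → ZMod 2) × (Fin n → ZMod 2)) :=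
    S.comap (LinearMap.inl (ZMod 2) _ _) with hA
  have hmemA : ∀ v, v ∈ A ↔ (v, (0 : (Fin m → ZMod 2) × (Fin m → ZMod 2))) ∈ S := fun v =>
    Iff.rfl
  have hA_orth : (sform n).orthogonal SL = A := by
    ext v
    rw [LinearMap.BilinForm.mem_orthogonal_iff, hmemA]
    constructor
    · intro hv
      rw [hSorth, LinearMap.BilinForm.mem_orthogonal_iff]
      intro u hu
      have h1 : sform n u.1 v = 0 := hv u.1 (hSL ▸ ⟨u, hu, rfl⟩)
      show pform n m u (v, 0) = 0
      rw [pform_apply]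
      simp [h1]
    · intro hv t ht
      rw [hSL] at ht
      obtain ⟨u, hu, rfl⟩ := ht
      rw [hSorth, LinearMap.BilinForm.mem_orthogonal_iff] at hv
      have h0 := hv u hu
      have h0' : pform n m u (v, 0) = 0 := h0
      rw [pform_apply] at h0'
      show sform n u.1 v = 0
      simpa using h0'
  have hAle : A ≤ SL := by
    intro v hv
    rw [hSL]
    exact ⟨(v, 0), hv, rfl⟩
  have hZA : ZL = A := by
    ext x
    rw [hZL]
    constructor
    · rintro ⟨hx, hx'⟩
      rw [← hA_orth, LinearMap.BilinForm.mem_orthogonal_iff]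
      intro t ht
      have := hx' t ht
      rw [hωL'] at this
      show sform n t x = 0
      rw [sform_symm]
      exact this
    · intro hx
      refine ⟨hAle hx, fun t ht => ?_⟩
      rw [← hA_orth, LinearMap.BilinForm.mem_orthogonal_iff] at hx
      rw [hωL', sform_symm]
      exact hx t ht
  have hsum : finrank (ZMod 2) SL + finrank (ZMod 2) ZL = 2 * n := by
    rw [hZA, ← hA_orth,
      LinearMap.BilinForm.finrank_orthogonal (sform_nondeg n), hVn]
    have := Submodule.finrank_le SL
    rw [hVn] at this
    omega
  exact ⟨hsum, fun p hp => by omega⟩
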